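/- There is a sufficiently large constant C ≥ 1 such that the following holds. Let N, N₀, R, q be positive integers with N divisible by 6, N₀ ≤ 2N/3, R ≤ N/6 ≤ N₀ − N/6, and 3·log₂(q) ≤ log₂( C(5N/6, N/6) ) − C, where C(a,b) denotes the binomial coefficient. Let Ψ be a uniformly random function from the family of all N₀-element subsets of [N] to [q] (i.e., the values Ψ(S) are i.i.d. uniform on [q]). Then with probability at least 1 − N^{R+1} · 2^{ − C(5N/6, N/6) / (C·q²) } over the choice of Ψ, the following holds: for every subset Q ⊆ [N] with |Q| ≤ R and every j ∈ [q], P_{T ∼ Unif}( Ψ(T) = j | Q ⊆ T ) ≤ 2/q, where T is drawn uniformly at random from the N₀-element subsets of [N]. -/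

import Mathlib

open Finset
open scoped Classical

/-!
For a fixed `Q` and colour `j`, the number `X` of sets `T ⊇ Q` coloured `j` is a sum of
`m = #{T ⊇ Q}` independent Bernoulli(1/q) variables, and `m ≥ C(5N/6, N/6)` by unimodality of
binomial coefficients. The exponential moment `E[2^X] = (1 + 1/q)^m ≤ 2^{3m/(2q)}` and Markov's
inequality give `P(X > 2m/q) ≤ 2^{-m/(2q)}`; a union bound over the at most `N^{R+1}` sets `Q`
and the `q` colours finishes the proof, the factor `q` being absorbed because
`16 q³ ≤ C(5N/6, N/6)`, which is what the hypothesis on `log₂ q` says for `C = 4`.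
-/

theorem Nat.choose_le_choose_right_of_le_of_two_mul_le {n j k : ℕ} (hjk : j ≤ k)
    (hk : 2 * k ≤ n) : n.choose j ≤ n.choose k := by
  induction k, hjk using Nat.le_induction with
  | base => rfl
  | succ k _ ih => exact (ih (by omega)).trans (Nat.choose_le_succ_of_lt_half_left (by omega))

theorem Nat.choose_le_choose_right_of_le_of_add_le {n j k : ℕ} (hjk : j ≤ k)
    (hn : j + k ≤ n) : n.choose j ≤ n.choose k := by
  rcases le_or_gt (2 * k) n with hk | hk
  · exact Nat.choose_le_choose_right_of_le_of_two_mul_le hjk hk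
  · rw [← Nat.choose_symm (by omega : k ≤ n)]
    exact Nat.choose_le_choose_right_of_le_of_two_mul_le (by omega) (by omega)

theorem choose_le_card_supersets {α : Type*} [Fintype α] [DecidableEq α] {k : ℕ} (Q : Finset α)
    (hQ : #Q ≤ k) :
    (Fintype.card α - #Q).choose (k - #Q) ≤ #{T : {S : Finset α // #S = k} | Q ⊆ T.1} := by
  rw [← card_compl, ← card_powersetCard]
  refine card_le_card_of_surjOn (fun T => T.1 \ Q) fun S hS => ?_
  rw [mem_coe, mem_powersetCard, subset_compl_iff_disjoint_right] at hS
  refine ⟨⟨Q ∪ S, by rw [card_union_of_disjoint hS.1.symm, hS.2]; omega⟩, ?_, ?_⟩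
  · simp
  · exact union_sdiff_cancel_left hS.1.symm

theorem choose_five_mul_le_card_supersets {t k : ℕ} (hk : 2 * t ≤ k) (hk' : k ≤ 4 * t)
    (Q : Finset (Fin (6 * t))) (hQ : #Q ≤ t) :
    (5 * t).choose t ≤ #{T : {S : Finset (Fin (6 * t)) // #S = k} | Q ⊆ T.1} :=
  calc (5 * t).choose t ≤ (6 * t - #Q).choose t := Nat.choose_le_choose t (by omega)
    _ ≤ (6 * t - #Q).choose (k - #Q) :=
        Nat.choose_le_choose_right_of_le_of_add_le (by omega) (by omega)
    _ ≤ _ := by simpa using choose_le_card_supersets Q (by omega : #Q ≤ k)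

theorem card_filter_card_le_le_pow {α : Type*} [Fintype α] {R : ℕ} (hR : R < Fintype.card α) :
    #{Q : Finset α | #Q ≤ R} ≤ Fintype.card α ^ (R + 1) := by
  set n := Fintype.card α
  have hsub : ({Q | #Q ≤ R} : Finset (Finset α)) ⊆
      (range (R + 1)).biUnion (powersetCard · univ) := by
    intro Q hQ
    simp only [mem_filter, mem_univ, true_and] at hQ
    simp only [mem_biUnion, mem_range, mem_powersetCard]
    exact ⟨#Q, by omega, subset_univ Q, rfl⟩
  calc #{Q : Finset α | #Q ≤ R} ≤ #(range (R + 1)) * n ^ R := by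
        refine (card_le_card hsub).trans (card_biUnion_le_card_mul _ _ _ fun i hi => ?_)
        rw [card_powersetCard, card_univ]
        exact (Nat.choose_le_pow n i).trans
          (Nat.pow_le_pow_right (by omega) (Nat.lt_succ_iff.mp (mem_range.mp hi)))
    _ ≤ n * n ^ R := by rw [card_range]; gcongr; omega
    _ = n ^ (R + 1) := by ring

theorem add_one_le_mul_two_rpow {x : ℝ} (hx : 0 < x) : x + 1 ≤ x * 2 ^ (3 / (2 * x)) := by
  have hlog : 2 / 3 < Real.log 2 := lt_trans (by norm_num) Real.log_two_gt_d9
  have key : 1 + 1 / x ≤ 2 ^ (3 / (2 * x)) := by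
    rw [Real.rpow_def_of_pos two_pos]
    refine le_trans ?_ (Real.add_one_le_exp _)
    have : 1 / x ≤ Real.log 2 * (3 / (2 * x)) := by
      rw [mul_div_assoc', le_div_iff₀ (by positivity), div_mul_eq_mul_div, div_le_iff₀ hx]
      nlinarith
    linarith
  calc x + 1 = x * (1 + 1 / x) := by field_simp
    _ ≤ x * 2 ^ (3 / (2 * x)) := by gcongr

theorem mul_two_rpow_neg_le {q B : ℕ} (hq : 0 < q) (hB : 16 * q ^ 3 ≤ B) :
    q * (2 : ℝ) ^ (-B / (2 * q) : ℝ) ≤ (2 : ℝ) ^ (-B / (4 * q ^ 2) : ℝ) := by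
  have hq1 : (1 : ℝ) ≤ q := Nat.one_le_cast.mpr hq
  have hBR : 16 * (q : ℝ) ^ 3 ≤ B := by exact_mod_cast hB
  have hexp : (q : ℝ) ≤ -B / (4 * q ^ 2) - -B / (2 * q) := by
    rw [show -(B : ℝ) / (4 * q ^ 2) - -B / (2 * q) = B * (2 * q - 1) / (4 * q ^ 2) by
      field_simp; ring, le_div_iff₀ (by positivity)]
    nlinarith [mul_le_mul_of_nonneg_right hBR (by linarith : (0 : ℝ) ≤ 2 * q - 1)]
  have hq2 : (q : ℝ) ≤ 2 ^ (q : ℝ) := by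
    rw [Real.rpow_natCast]; exact_mod_cast Nat.lt_two_pow_self.le
  rw [← le_div_iff₀ (by positivity), ← Real.rpow_sub two_pos]
  exact hq2.trans (Real.rpow_le_rpow_of_exponent_le one_le_two hexp)

theorem sixteen_mul_pow_three_le_of_logb {q B : ℕ} (hq : 0 < q) (hB : 0 < B)
    (h : 3 * Real.logb 2 q ≤ Real.logb 2 B - 4) : 16 * q ^ 3 ≤ B := by
  have hlogb : Real.logb 2 (16 * q ^ 3 : ℝ) ≤ Real.logb 2 B := by
    rw [Real.logb_mul (by norm_num) (by positivity), Real.logb_pow,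
      show (16 : ℝ) = 2 ^ (4 : ℕ) by norm_num, Real.logb_pow, Real.logb_self_eq_one one_lt_two]
    push_cast; linarith
  rw [Real.logb_le_logb one_lt_two (by positivity) (by exact_mod_cast hB)] at hlogb
  exact_mod_cast hlogb

theorem sum_two_pow_card_filter_eq {α : Type*} [Fintype α] (q : ℕ) (𝒯 : Finset α) (j : Fin q) :
    ∑ Ψ : α → Fin q, 2 ^ #{T ∈ 𝒯 | Ψ T = j} = (q + 1) ^ #𝒯 * q ^ (Fintype.card α - #𝒯) := by
  have weight (Ψ : α → Fin q) :
      2 ^ #{T ∈ 𝒯 | Ψ T = j} = ∏ T, if T ∈ 𝒯 ∧ Ψ T = j then 2 else 1 := by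
    rw [← prod_filter, ← prod_const]
    congr 1
    ext; simp
  have row (T : α) :
      ∑ b : Fin q, (if T ∈ 𝒯 ∧ b = j then 2 else 1) = if T ∈ 𝒯 then q + 1 else q := by
    split_ifs with hT
    · simp only [hT, true_and]
      rw [sum_ite, filter_eq' univ j, filter_ne' univ j, if_pos (mem_univ j), sum_const, sum_const,
        card_singleton, card_erase_of_mem (mem_univ j), card_fin, smul_eq_mul, smul_eq_mul]
      have := j.pos
      omega
    · simp [hT]
  simp_rw [weight, ← Fintype.prod_sum (fun T b => if T ∈ 𝒯 ∧ b = j then 2 else 1), row]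
  rw [prod_ite, prod_const, prod_const, ← card_compl]
  congr 3 <;> ext <;> simp

theorem card_two_div_mul_lt_card_filter_le {α : Type*} [Fintype α] {q : ℕ} (hq : 0 < q)
    (𝒯 : Finset α) (j : Fin q) :
    (#{Ψ : α → Fin q | 2 / q * #𝒯 < (#{T ∈ 𝒯 | Ψ T = j} : ℝ)} : ℝ) ≤
      q ^ Fintype.card α * (2 : ℝ) ^ (-#𝒯 / (2 * q) : ℝ) := by
  set m : ℕ := #𝒯
  set K := Fintype.card α
  have hqR : (0 : ℝ) < q := Nat.cast_pos.mpr hq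
  have hmK : m ≤ K := card_le_univ 𝒯
  have markov : (#{Ψ : α → Fin q | 2 / q * m < (#{T ∈ 𝒯 | Ψ T = j} : ℝ)} : ℝ) *
      (2 : ℝ) ^ (2 / q * m : ℝ) ≤ ∑ Ψ : α → Fin q, (2 : ℝ) ^ #{T ∈ 𝒯 | Ψ T = j} := by
    rw [← nsmul_eq_mul]
    refine (card_nsmul_le_sum _ _ _ fun Ψ hΨ => ?_).trans
      (sum_le_sum_of_subset_of_nonneg (subset_univ _) fun _ _ _ => by positivity)
    rw [← Real.rpow_natCast]
    exact Real.rpow_le_rpow_of_exponent_le one_le_two (mem_filter.mp hΨ).2.le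
  have moment : ∑ Ψ : α → Fin q, (2 : ℝ) ^ #{T ∈ 𝒯 | Ψ T = j} ≤
      q ^ K * (2 : ℝ) ^ (3 / (2 * q) * m : ℝ) := by
    have := congrArg (Nat.cast : ℕ → ℝ) (sum_two_pow_card_filter_eq q 𝒯 j)
    push_cast at this
    rw [this, Real.rpow_mul zero_le_two, Real.rpow_natCast, ← pow_sub_mul_pow (q : ℝ) hmK,
      mul_comm, mul_assoc, ← mul_pow]
    gcongr
    exact add_one_le_mul_two_rpow hqR
  rw [← le_div_iff₀ (by positivity)] at markov
  calc _ ≤ _ := markov.trans (div_le_div_of_nonneg_right moment (by positivity))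
    _ = q ^ K * (2 : ℝ) ^ (-m / (2 * q) : ℝ) := by
      rw [mul_div_assoc, ← Real.rpow_sub two_pos]
      congr 2
      field_simp
      ring

theorem one_sub_mul_pow_le_card_forall_card_filter_le {ι α : Type*} [Fintype α] {q B : ℕ}
    (hq : 0 < q) (hB : 16 * q ^ 3 ≤ B) (I : Finset ι) (𝒯 : ι → Finset α)
    (h𝒯 : ∀ i ∈ I, B ≤ #(𝒯 i)) :
    (1 - #I * (2 : ℝ) ^ (-B / (4 * q ^ 2) : ℝ)) * q ^ Fintype.card α ≤
      #{Ψ : α → Fin q | ∀ i ∈ I, ∀ j, (#{T ∈ 𝒯 i | Ψ T = j} : ℝ) ≤ 2 / q * #(𝒯 i)} := by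
  set K := Fintype.card α
  set good : (α → Fin q) → Prop :=
    fun Ψ => ∀ i ∈ I, ∀ j, (#{T ∈ 𝒯 i | Ψ T = j} : ℝ) ≤ 2 / q * #(𝒯 i)
  set bad : ι → Fin q → Finset (α → Fin q) :=
    fun i j => {Ψ | 2 / q * #(𝒯 i) < (#{T ∈ 𝒯 i | Ψ T = j} : ℝ)}
  have hbad_sub : ({Ψ | ¬ good Ψ} : Finset (α → Fin q)) ⊆
      I.biUnion fun i => univ.biUnion (bad i) := by
    intro Ψ hΨ
    simp only [good, mem_filter, mem_univ, true_and, not_forall, not_le] at hΨ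
    obtain ⟨i, hi, j, hj⟩ := hΨ
    simp only [mem_biUnion, mem_univ, true_and]
    exact ⟨i, hi, j, by simpa [bad] using hj⟩
  have hbad_card : ∀ i ∈ I, ∀ j, (#(bad i j) : ℝ) ≤ q ^ K * (2 : ℝ) ^ (-B / (2 * q) : ℝ) := by
    intro i hi j
    refine (card_two_div_mul_lt_card_filter_le hq (𝒯 i) j).trans ?_
    gcongr
    · exact one_le_two
    · exact_mod_cast h𝒯 i hi
  have hunion : (#{Ψ | ¬ good Ψ} : ℝ) ≤ #I * (2 : ℝ) ^ (-B / (4 * q ^ 2) : ℝ) * q ^ K :=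
    calc _ ≤ (∑ i ∈ I, ∑ j, #(bad i j) : ℝ) := by
          exact_mod_cast (card_le_card hbad_sub).trans
            (card_biUnion_le.trans (sum_le_sum fun i _ => card_biUnion_le))
      _ ≤ ∑ i ∈ I, ∑ _j : Fin q, q ^ K * (2 : ℝ) ^ (-B / (2 * q) : ℝ) :=
          sum_le_sum fun i hi => sum_le_sum fun j _ => hbad_card i hi j
      _ = #I * (q * (2 : ℝ) ^ (-B / (2 * q) : ℝ)) * q ^ K := by
          rw [sum_const, sum_const, card_fin, nsmul_eq_mul, nsmul_eq_mul]; ring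
      _ ≤ _ := by gcongr; exact mul_two_rpow_neg_le hq hB
  have htotal : (#{Ψ | good Ψ} : ℝ) + #{Ψ | ¬ good Ψ} = q ^ K := by
    rw [← Nat.cast_add, card_filter_add_card_filter_not, card_univ, Fintype.card_fun,
      Fintype.card_fin, Nat.cast_pow]
  linarith

/-- existence of a randomness extractor: there is a constant
`C ≥ 1` such that for all positive integers `N, N₀, R, q` with `6 ∣ N`,
`N₀ ≤ 2N/3`, `R ≤ N/6 ≤ N₀ − N/6`, and `3 log₂ q ≤ log₂ C(5N/6, N/6) − C`,
a uniformly random function `Ψ` from the `N₀`-element subsets of `[N]` to `[q]`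
satisfies, with probability at least `1 − N^{R+1} · 2^{−C(5N/6,N/6)/(C q²)}`:
for every `Q ⊆ [N]` with `|Q| ≤ R` and every `j ∈ [q]`,
`P_{T ∼ Unif}( Ψ(T) = j | Q ⊆ T ) ≤ 2/q` (stated in the cross-multiplied form
`#{T : Q ⊆ T, Ψ(T) = j} ≤ (2/q) · #{T : Q ⊆ T}`).  The probability over `Ψ` is
the normalized count of good functions among all functions. -/
theorem extractor_exists :
    ∃ C : ℝ, 1 ≤ C ∧
      ∀ N N₀ R q : ℕ, 0 < N → 0 < N₀ → 0 < R → 0 < q → 6 ∣ N →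
        N₀ ≤ 2 * N / 3 → R ≤ N / 6 → N / 6 ≤ N₀ - N / 6 →
        3 * Real.logb 2 q ≤ Real.logb 2 (Nat.choose (5 * N / 6) (N / 6)) - C →
        (1 - (N : ℝ) ^ (R + 1) *
              (2 : ℝ) ^ (-((Nat.choose (5 * N / 6) (N / 6) : ℝ)) / (C * (q : ℝ) ^ 2))) *
            (Fintype.card ({S : Finset (Fin N) // S.card = N₀} → Fin q)) ≤
          ((Finset.univ.filter
              (fun Ψ : {S : Finset (Fin N) // S.card = N₀} → Fin q =>
                ∀ Q : Finset (Fin N), Q.card ≤ R → ∀ j : Fin q,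
                  ((Finset.univ.filter
                      (fun T : {S : Finset (Fin N) // S.card = N₀} =>
                        Q ⊆ T.1 ∧ Ψ T = j)).card : ℝ) ≤
                    (2 / (q : ℝ)) *
                      ((Finset.univ.filter
                          (fun T : {S : Finset (Fin N) // S.card = N₀} =>
                            Q ⊆ T.1)).card : ℝ))).card : ℝ) := by
  refine ⟨4, by norm_num, fun N N₀ R q hN _ _ hq hdvd hN₀le hRle hN₀ge hlog => ?_⟩
  obtain ⟨t, rfl⟩ := hdvd
  simp only [show 6 * t / 6 = t by omega, show 5 * (6 * t) / 6 = 5 * t by omega,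
    show 2 * (6 * t) / 3 = 4 * t by omega] at hN₀le hRle hN₀ge hlog ⊢
  have hB := sixteen_mul_pow_three_le_of_logb hq (Nat.choose_pos (by omega)) hlog
  have hI : #{Q : Finset (Fin (6 * t)) | #Q ≤ R} ≤ (6 * t) ^ (R + 1) := by
    simpa using card_filter_card_le_le_pow (α := Fin (6 * t)) (by rw [Fintype.card_fin]; omega)
  have key := one_sub_mul_pow_le_card_forall_card_filter_le hq hB
    {Q : Finset (Fin (6 * t)) | #Q ≤ R}
    (fun Q => {T : {S : Finset (Fin (6 * t)) // #S = N₀} | Q ⊆ T.1})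
    (fun Q hQ =>
      choose_five_mul_le_card_supersets (by omega) hN₀le Q ((mem_filter.mp hQ).2.trans hRle))
  rw [Fintype.card_fun, Fintype.card_fin]
  push_cast
  calc _ ≤ _ := by gcongr; exact_mod_cast hI
    _ ≤ _ := key
    _ = _ := by congr 2; ext Ψ; simp [filter_filter]
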